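/- For a non-crossing partition π of [n], define wt(B) = 0 if block B is a singleton, and wt(B) = j_1 + j_p + 2∑_{k=2}^{p-1} j_k - p + 1 for B = (j_1 < ... < j_p) with p ≥ 2. Then ∑_{π ∈ NC(n)} q^{∑_{B∈π} wt(B)} = (1/[n+1]) qbinom(2n, n). -/

import Mathlib

/-!
Call a block `B` of a non-crossing partition `P` *splitting* if no block of `P` has elements on
both sides of `max B`, and let `W(n, h)` be the generating polynomial of non-crossing partitions
of `[n]` with `h` marked splitting blocks, weighted by `q ^ (∑_B wt(B) + ∑_{B marked} max B)`;
the theorem concerns `W(n, 0)`. A marked partition of `[n + 1]` either has `{n + 1}` as a block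
(marked or not: remove it), or `n + 1` lies in a larger block `B` (detach `n + 1` and mark the
rest of `B`, which then is the marked block with the largest maximum; the number of marks grows
by one unless `B` was marked). Since `wt(B) = wt(B - {n+1}) + max (B - {n+1}) + n`, this gives
`W(n+1, h) = W(n, h) + q^(n+1) W(n, h-1) + q^n W(n, h+1) + q^(2n+1) W(n, h)` for `h ≥ 1` and
`W(n+1, 0) = W(n, 0) + q^n W(n, 1)`. Two `q`-Pascal steps show that the `q`-ballot numbers
`q^(h(h+1)/2) (C(2n, n+h) - q^(h+1) C(2n, n+h+1))` satisfy the same recursion, so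
`W(n, 0) = C(2n, n) - q C(2n, n+1)`, and `[n+1] W(n, 0) = C(2n, n)` is the `q`-absorption
identity `[n+1] C(2n, n+1) = [n] C(2n, n)`.
-/

open Finset Polynomial

/-- `P` is a set partition of `{1,…,n}`: blocks are nonempty subsets of `[n]` and
every element of `[n]` lies in exactly one block. -/
def IsPartitionOf (n : ℕ) (P : Finset (Finset ℕ)) : Prop :=
  (∀ B ∈ P, B.Nonempty) ∧ (∀ B ∈ P, B ⊆ Finset.Icc 1 n) ∧
  (∀ i ∈ Finset.Icc 1 n, ∃! B, B ∈ P ∧ i ∈ B)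

/-- `P` is non-crossing: there are no `a < b < c < d` with `a, c` in one block and
`b, d` in a different block. -/
def IsNonCrossing (P : Finset (Finset ℕ)) : Prop :=
  ∀ B₁ ∈ P, ∀ B₂ ∈ P, ∀ a ∈ B₁, ∀ c ∈ B₁, ∀ b ∈ B₂, ∀ d ∈ B₂,
    a < b → b < c → c < d → B₁ = B₂

/-- The weight of a block `B = (j_1 < … < j_p)`:
`wt(B) = 0` if `p = 1` and `wt(B) = j_1 + j_p + 2∑_{k=2}^{p-1} j_k - p + 1`
(equivalently `2∑_{j∈B} j + 1 - (min B + max B + p)`) if `p ≥ 2`. -/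
def blockWt (B : Finset ℕ) : ℕ :=
  if h : 2 ≤ B.card then
    (∑ j ∈ B, 2 * j) + 1 -
      (B.min' (Finset.card_pos.mp (by omega)) + B.max' (Finset.card_pos.mp (by omega)) + B.card)
  else 0

/-- The `q`-integer `[m] = 1 + q + ⋯ + q^{m-1}`. -/
noncomputable def qInt (m : ℕ) : Polynomial ℕ := ∑ i ∈ Finset.range m, X ^ i

/-- The Gaussian binomial coefficient. -/
noncomputable def qBinom : ℕ → ℕ → Polynomial ℕ
  | _, 0 => 1
  | 0, _ + 1 => 0
  | n + 1, k + 1 => qBinom n k + X ^ (k + 1) * qBinom n (k + 1)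

/-! ### Gaussian binomial coefficients -/

lemma qInt_succ (m : ℕ) : qInt (m + 1) = qInt m + X ^ m := by
  simp [qInt, Finset.sum_range_succ]

lemma qInt_succ' (m : ℕ) : qInt (m + 1) = 1 + X * qInt m := by
  simp only [qInt, Finset.sum_range_succ', pow_succ', ← Finset.mul_sum, pow_zero]
  ring

lemma qBinom_zero_right (m : ℕ) : qBinom m 0 = 1 := by
  cases m <;> rfl

lemma qBinom_succ_succ (m k : ℕ) :
    qBinom (m + 1) (k + 1) = qBinom m k + X ^ (k + 1) * qBinom m (k + 1) := rfl

lemma qBinom_eq_zero_of_lt {m k : ℕ} (h : m < k) : qBinom m k = 0 := by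
  induction m generalizing k with
  | zero => obtain ⟨k, rfl⟩ := Nat.exists_eq_succ_of_ne_zero h.ne'; rfl
  | succ m ih =>
    obtain ⟨k, rfl⟩ := Nat.exists_eq_succ_of_ne_zero (Nat.ne_zero_of_lt h)
    rw [qBinom_succ_succ, ih (by omega), ih (by omega), mul_zero, add_zero]

lemma qBinom_self (m : ℕ) : qBinom m m = 1 := by
  induction m with
  | zero => rfl
  | succ m ih => rw [qBinom_succ_succ, ih, qBinom_eq_zero_of_lt m.lt_succ_self, mul_zero, add_zero]

lemma qBinom_one_right (m : ℕ) : qBinom m 1 = qInt m := by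
  induction m with
  | zero => rfl
  | succ m ih => rw [qBinom_succ_succ, qBinom_zero_right, ih, qInt_succ', pow_one]

lemma qBinom_succ_succ' (a b : ℕ) :
    qBinom (a + b + 1) (a + 1) = X ^ b * qBinom (a + b) a + qBinom (a + b) (a + 1) := by
  induction b generalizing a with
  | zero => rw [add_zero, qBinom_self, qBinom_self, qBinom_eq_zero_of_lt a.lt_succ_self]; ring
  | succ b ih =>
    induction a with
    | zero =>
      simp only [zero_add, qBinom_zero_right, qBinom_one_right, mul_one]
      rw [qInt_succ, add_comm]
    | succ a ih' =>
      have r1 : qBinom (a + b + 2) (a + 1) = X ^ (b + 1) * qBinom (a + b + 1) a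
          + qBinom (a + b + 1) (a + 1) := ih'
      have r2 : qBinom (a + b + 2) (a + 2) = X ^ b * qBinom (a + b + 1) (a + 1)
          + qBinom (a + b + 1) (a + 2) := by
        rw [show a + b + 2 = a + 1 + b + 1 by ring, ih (a + 1), show a + 1 + b = a + b + 1 by ring]
      rw [show a + 1 + (b + 1) + 1 = a + b + 2 + 1 by ring, qBinom_succ_succ, r1, r2,
        show a + 1 + (b + 1) = a + b + 1 + 1 by ring, qBinom_succ_succ (a + b + 1) a,
        qBinom_succ_succ (a + b + 1) (a + 1)]
      ring

lemma qBinom_symm_add (a b : ℕ) : qBinom (a + b) a = qBinom (a + b) b := by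
  induction b generalizing a with
  | zero => rw [add_zero, qBinom_self, qBinom_zero_right]
  | succ b ih =>
    induction a with
    | zero => rw [zero_add, qBinom_self, qBinom_zero_right]
    | succ a ih' =>
      have s1 : qBinom (a + b + 1) a = qBinom (a + b + 1) (b + 1) := ih'
      have s2 : qBinom (a + b + 1) (a + 1) = qBinom (a + b + 1) b := by
        rw [show a + b + 1 = a + 1 + b by ring, ih (a + 1)]
      rw [show a + 1 + (b + 1) = a + b + 1 + 1 by ring, qBinom_succ_succ, s1, s2,
        show a + b + 1 + 1 = b + (a + 1) + 1 by ring, qBinom_succ_succ',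
        show b + (a + 1) = a + b + 1 by ring]
      ring

lemma one_sub_X_ne_zero : (1 - X : ℤ[X]) ≠ 0 := fun h => by
  simpa using congrArg (eval 0) h

lemma map_qInt (m : ℕ) :
    (qInt m).map (Nat.castRingHom ℤ) = ∑ i ∈ range m, (X : ℤ[X]) ^ i := by
  simp [qInt, Polynomial.map_sum]

/-- The two `q`-Pascal rules for `C(m + 1, k + 1)` differ by
`(1 - q) ([k + 1] C(m, k + 1) - [m - k] C(m, k))`. -/
lemma qBinom_succ_right_mul_qInt (m k : ℕ) :
    qBinom m (k + 1) * qInt (k + 1) = qBinom m k * qInt (m - k) := by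
  rcases lt_or_ge m k with hmk | hkm
  · rw [qBinom_eq_zero_of_lt hmk, qBinom_eq_zero_of_lt (by omega), zero_mul, zero_mul]
  obtain ⟨b, rfl⟩ := Nat.exists_eq_add_of_le hkm
  have pascal : (qBinom (k + b) k + X ^ (k + 1) * qBinom (k + b) (k + 1)).map (Nat.castRingHom ℤ)
      = (X ^ b * qBinom (k + b) k + qBinom (k + b) (k + 1)).map (Nat.castRingHom ℤ) := by
    rw [← qBinom_succ_succ, qBinom_succ_succ']
  apply map_injective (Nat.castRingHom ℤ) Nat.cast_injective
  apply mul_left_cancel₀ one_sub_X_ne_zero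
  simp only [Polynomial.map_mul, Polynomial.map_add, Polynomial.map_pow, map_X,
    map_qInt, Nat.add_sub_cancel_left] at pascal ⊢
  linear_combination
    (qBinom (k + b) (k + 1)).map (Nat.castRingHom ℤ) * mul_neg_geom_sum (X : ℤ[X]) (k + 1)
    - (qBinom (k + b) k).map (Nat.castRingHom ℤ) * mul_neg_geom_sum (X : ℤ[X]) b - pascal

/-! ### `q`-ballot numbers -/

noncomputable def qBallot (n h : ℕ) : ℤ[X] :=
  X ^ (h + 1).choose 2 * ((qBinom (2 * n) (n + h)).map (Nat.castRingHom ℤ)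
    - X ^ (h + 1) * (qBinom (2 * n) (n + h + 1)).map (Nat.castRingHom ℤ))

/-- The value halfway through one step `n → n + 1` of the recursion of `qBallot`. -/
noncomputable def qBallotOdd (n h : ℕ) : ℤ[X] :=
  X ^ (h + 1).choose 2 * ((qBinom (2 * n + 1) (n + h + 1)).map (Nat.castRingHom ℤ)
    - X ^ (h + 1) * (qBinom (2 * n + 1) (n + h + 2)).map (Nat.castRingHom ℤ))

lemma choose_two_succ_succ (h : ℕ) : (h + 2).choose 2 = (h + 1).choose 2 + (h + 1) := by
  rw [Nat.choose_succ_succ', Nat.choose_one_right, add_comm]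

lemma qBallotOdd_eq (n h : ℕ) : qBallotOdd n h = qBallot n h + X ^ n * qBallot n (h + 1) := by
  simp only [qBallotOdd, qBallot, show n + h + 2 = n + h + 1 + 1 by ring,
    show n + (h + 1) = n + h + 1 by ring, qBinom_succ_succ, choose_two_succ_succ,
    Polynomial.map_add, Polynomial.map_mul, Polynomial.map_pow, map_X]
  ring

lemma qBallot_succ_zero_eq (n : ℕ) : qBallot (n + 1) 0 = qBallotOdd n 0 := by
  have r1 := qBinom_succ_succ' n (n + 1)
  have r2 := qBinom_succ_succ' (n + 1) n
  have symm := qBinom_symm_add n (n + 1)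
  rw [show n + (n + 1) + 1 = 2 * (n + 1) by ring, show n + (n + 1) = 2 * n + 1 by ring] at r1
  rw [show n + 1 + n + 1 = 2 * (n + 1) by ring, show n + 1 + n = 2 * n + 1 by ring] at r2
  rw [show n + (n + 1) = 2 * n + 1 by ring] at symm
  simp only [qBallotOdd, qBallot, add_zero, show n + 1 + 1 = n + 2 by ring, r1, r2, symm,
    Polynomial.map_add, Polynomial.map_mul, Polynomial.map_pow, map_X]
  ring

lemma qBallot_succ_succ_eq (n h : ℕ) :
    qBallot (n + 1) (h + 1) = qBallotOdd n (h + 1) + X ^ (n + 1) * qBallotOdd n h := by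
  rcases lt_or_ge h n with hhn | hnh
  · obtain ⟨d, rfl⟩ := Nat.exists_eq_add_of_lt hhn
    have r1 := qBinom_succ_succ' (2 * h + d + 2) (d + 1)
    have r2 := qBinom_succ_succ' (2 * h + d + 3) d
    simp only [qBallotOdd, qBallot, choose_two_succ_succ]
    ring_nf at r1 r2 ⊢
    rw [r1, r2]
    simp only [Polynomial.map_add, Polynomial.map_mul, Polynomial.map_pow, map_X]
    ring
  · obtain ⟨d, rfl⟩ := Nat.exists_eq_add_of_le hnh
    rcases d with _ | d
    · have top :
          qBinom (2 * (n + 1)) (n + 1 + (n + 0 + 1)) = qBinom (2 * n + 1) (n + (n + 0) + 1) := by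
        rw [show n + 1 + (n + 0 + 1) = 2 * (n + 1) by ring,
          show n + (n + 0) + 1 = 2 * n + 1 by ring, qBinom_self, qBinom_self]
      simp (disch := omega) only [qBallotOdd, qBallot, choose_two_succ_succ, qBinom_eq_zero_of_lt,
        Polynomial.map_zero, top]
      ring
    · simp (disch := omega) only [qBallotOdd, qBallot, qBinom_eq_zero_of_lt, Polynomial.map_zero]
      ring

lemma qBallot_succ_zero (n : ℕ) : qBallot (n + 1) 0 = qBallot n 0 + X ^ n * qBallot n 1 := by
  rw [qBallot_succ_zero_eq, qBallotOdd_eq]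

lemma qBallot_succ_succ (n h : ℕ) :
    qBallot (n + 1) (h + 1) = qBallot n (h + 1) + X ^ (n + 1) * qBallot n h
      + X ^ n * qBallot n (h + 2) + X ^ (2 * n + 1) * qBallot n (h + 1) := by
  rw [qBallot_succ_succ_eq, qBallotOdd_eq, qBallotOdd_eq]
  ring

lemma qBallot_zero (h : ℕ) : qBallot 0 h = if h = 0 then 1 else 0 := by
  rcases h with _ | h
  · simp [qBallot, qBinom_zero_right, qBinom_eq_zero_of_lt]
  · simp [qBallot, qBinom_eq_zero_of_lt]

lemma qInt_succ_mul_qBallot_zero (n : ℕ) :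
    (qInt (n + 1)).map (Nat.castRingHom ℤ) * qBallot n 0
      = (qBinom (2 * n) n).map (Nat.castRingHom ℤ) := by
  have absorb :=
    congrArg (Polynomial.map (Nat.castRingHom ℤ)) (qBinom_succ_right_mul_qInt (2 * n) n)
  have hq := congrArg (Polynomial.map (Nat.castRingHom ℤ)) (qInt_succ' n)
  rw [show 2 * n - n = n by omega] at absorb
  simp only [Polynomial.map_mul, Polynomial.map_add, Polynomial.map_one, map_X] at absorb hq
  simp only [qBallot, zero_add, add_zero, pow_one, Nat.choose_eq_zero_of_lt one_lt_two, pow_zero,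
    one_mul]
  linear_combination (qBinom (2 * n) n).map (Nat.castRingHom ℤ) * hq - X * absorb

/-! ### Set partitions -/

section Blocks

variable {α : Type*} {S B B' C : Finset α} {P M : Finset (Finset α)} {e : α}

structure IsPartition (S : Finset α) (P : Finset (Finset α)) : Prop where
  nonempty : ∀ B ∈ P, B.Nonempty
  subset : ∀ B ∈ P, B ⊆ S
  existsUnique : ∀ i ∈ S, ∃! B, B ∈ P ∧ i ∈ B

namespace IsPartition

lemma eq_of_mem_of_mem (hP : IsPartition S P) (hB : B ∈ P) (hC : C ∈ P) (heB : e ∈ B)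
    (heC : e ∈ C) : B = C :=
  (hP.existsUnique e (hP.subset B hB heB)).unique ⟨hB, heB⟩ ⟨hC, heC⟩

lemma eq_empty (hP : IsPartition ∅ P) : P = ∅ :=
  eq_empty_of_forall_notMem fun B hB => by
    simpa using (hP.subset B hB) (hP.nonempty B hB).choose_spec

end IsPartition

variable [DecidableEq α]

def replaceBlock (P : Finset (Finset α)) (B B' : Finset α) : Finset (Finset α) :=
  insert B' (P.erase B)

lemma replaceBlock_of_notMem (hB : B ∉ P) : replaceBlock P B B' = insert B' P := by
  rw [replaceBlock, erase_eq_of_notMem hB]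

lemma replaceBlock_replaceBlock (hB : B ∈ P) (hB' : B' ∉ P) :
    replaceBlock (replaceBlock P B B') B' B = P := by
  rw [replaceBlock, replaceBlock, erase_insert (fun h => hB' (mem_of_mem_erase h)), insert_erase hB]

lemma replaceBlock_subset_replaceBlock (h : M ⊆ P) :
    replaceBlock M B B' ⊆ replaceBlock P B B' :=
  insert_subset_insert _ (erase_subset_erase _ h)

lemma card_replaceBlock (hB : B ∈ P) (hB' : B' ∉ P) : (replaceBlock P B B').card = P.card := by
  rw [replaceBlock, card_insert_of_notMem (fun h => hB' (mem_of_mem_erase h)),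
    card_erase_add_one hB]

lemma sum_replaceBlock_add {β : Type*} [AddCommMonoid β] (f : Finset α → β) (hB : B ∈ P)
    (hB' : B' ∉ P) : ∑ C ∈ replaceBlock P B B', f C + f B = ∑ C ∈ P, f C + f B' := by
  rw [replaceBlock, sum_insert (fun h => hB' (mem_of_mem_erase h)), add_assoc,
    sum_erase_add _ _ hB, add_comm]

namespace IsPartition

lemma erase (hP : IsPartition S P) (hB : B ∈ P) : IsPartition (S \ B) (P.erase B) where
  nonempty C hC := hP.nonempty C (mem_of_mem_erase hC)
  subset C hC x hx := mem_sdiff.2 ⟨hP.subset C (mem_of_mem_erase hC) hx,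
    fun hxB => ne_of_mem_erase hC (hP.eq_of_mem_of_mem (mem_of_mem_erase hC) hB hx hxB)⟩
  existsUnique i hi := by
    obtain ⟨D, ⟨hD, hiD⟩, huniq⟩ := hP.existsUnique i (mem_sdiff.1 hi).1
    refine ⟨D, ⟨mem_erase.2 ⟨?_, hD⟩, hiD⟩,
      fun C hC => huniq C ⟨mem_of_mem_erase hC.1, hC.2⟩⟩
    rintro rfl
    exact (mem_sdiff.1 hi).2 hiD

lemma insert (hP : IsPartition S P) (hB : B.Nonempty) (hBS : Disjoint B S) :
    IsPartition (S ∪ B) (insert B P) where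
  nonempty C hC := by
    rcases mem_insert.1 hC with rfl | hC
    exacts [hB, hP.nonempty C hC]
  subset C hC := by
    rcases mem_insert.1 hC with rfl | hC
    exacts [subset_union_right, (hP.subset C hC).trans subset_union_left]
  existsUnique i hi := by
    rcases mem_union.1 hi with hiS | hiB
    · obtain ⟨D, ⟨hD, hiD⟩, huniq⟩ := hP.existsUnique i hiS
      refine ⟨D, ⟨mem_insert_of_mem hD, hiD⟩, fun C ⟨hC, hiC⟩ => ?_⟩
      rcases mem_insert.1 hC with rfl | hC
      exacts [absurd hiS (disjoint_left.1 hBS hiC), huniq C ⟨hC, hiC⟩]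
    · refine ⟨B, ⟨mem_insert_self _ _, hiB⟩, fun C ⟨hC, hiC⟩ => ?_⟩
      rcases mem_insert.1 hC with rfl | hC
      exacts [rfl, absurd (hP.subset C hC hiC) (disjoint_left.1 hBS hiB)]

lemma replaceBlock (hP : IsPartition S P) (hB : B ∈ P) (hB' : B'.Nonempty)
    (hdisj : Disjoint B' (S \ B)) : IsPartition (S \ B ∪ B') (replaceBlock P B B') :=
  (hP.erase hB).insert hB' hdisj

end IsPartition

def blockOf (P : Finset (Finset α)) (e : α) : Finset α :=
  (P.filter (e ∈ ·)).sup id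

lemma blockOf_eq (hB : B ∈ P) (he : e ∈ B) (huniq : ∀ C ∈ P, e ∈ C → C = B) :
    blockOf P e = B := by
  have : P.filter (e ∈ ·) = {B} := by
    ext C
    simp only [mem_filter, mem_singleton]
    exact ⟨fun ⟨hC, heC⟩ => huniq C hC heC, by rintro rfl; exact ⟨hB, he⟩⟩
  rw [blockOf, this, sup_singleton, id]

lemma erase_nonempty_of_singleton_notMem (hB : B ∈ P) (he : e ∈ B) (hs : {e} ∉ P) :
    (B.erase e).Nonempty :=
  (erase_nonempty he).2 ((nontrivial_iff_ne_singleton he).2 fun h => hs (h ▸ hB))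

lemma IsPartition.blockOf_eq (hP : IsPartition S P) (hB : B ∈ P) (he : e ∈ B) :
    blockOf P e = B :=
  _root_.blockOf_eq hB he fun _ hC heC => hP.eq_of_mem_of_mem hC hB heC he

lemma IsPartition.blockOf_mem (hP : IsPartition S P) (he : e ∈ S) :
    blockOf P e ∈ P ∧ e ∈ blockOf P e := by
  obtain ⟨B, ⟨hB, heB⟩, -⟩ := hP.existsUnique e he
  rw [hP.blockOf_eq hB heB]
  exact ⟨hB, heB⟩

end Blocks

lemma sup_id_mem {α : Type*} [LinearOrder α] [OrderBot α] {B : Finset α} (hB : B.Nonempty) :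
    B.sup id ∈ B := by
  obtain ⟨_, hb, hsup⟩ := exists_mem_eq_sup B hB id
  rwa [hsup]

def SplitsAt (P : Finset (Finset ℕ)) (t : ℕ) : Prop :=
  ∀ C ∈ P, ∀ x ∈ C, ∀ y ∈ C, x ≤ t → y ≤ t

section NonCrossing

variable {S B B' C T : Finset ℕ} {P Q : Finset (Finset ℕ)} {e t : ℕ}

lemma splitsAt_of_forall_le (h : ∀ C ∈ P, ∀ y ∈ C, y ≤ t) : SplitsAt P t :=
  fun C hC _ _ y hy _ => h C hC y hy

lemma SplitsAt.of_forall_subset (h : SplitsAt P t) (hQ : ∀ C ∈ Q, ∃ D ∈ P, C ⊆ D) :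
    SplitsAt Q t := by
  intro C hC x hx y hy hxt
  obtain ⟨D, hD, hCD⟩ := hQ C hC
  exact h D hD x (hCD hx) y (hCD hy) hxt

lemma SplitsAt.mono (h : SplitsAt P t) (hQ : Q ⊆ P) : SplitsAt Q t :=
  h.of_forall_subset fun C hC => ⟨C, hQ hC, subset_rfl⟩

lemma SplitsAt.replaceBlock_of_subset (h : SplitsAt P t) (hB : B ∈ P) (hB' : B' ⊆ B) :
    SplitsAt (replaceBlock P B B') t :=
  h.of_forall_subset fun C hC => by
    rcases mem_insert.1 hC with rfl | hC
    exacts [⟨B, hB, hB'⟩, ⟨C, mem_of_mem_erase hC, subset_rfl⟩]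

lemma SplitsAt.insert_singleton (h : SplitsAt P t) (e : ℕ) : SplitsAt (insert {e} P) t := by
  intro C hC x hx y hy hxt
  rcases mem_insert.1 hC with rfl | hC
  · rw [mem_singleton] at hx hy
    omega
  · exact h C hC x hx y hy hxt

lemma IsNonCrossing.mono (h : IsNonCrossing P) (hQ : Q ⊆ P) : IsNonCrossing Q :=
  fun B₁ h₁ B₂ h₂ => h B₁ (hQ h₁) B₂ (hQ h₂)

lemma IsNonCrossing.insert_singleton (h : IsNonCrossing P) (e : ℕ) :
    IsNonCrossing (insert {e} P) := by
  intro B₁ h₁ B₂ h₂ a ha c hc b hb d hd hab hbc hcd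
  rcases mem_insert.1 h₁ with rfl | h₁
  · rw [mem_singleton] at ha hc
    omega
  rcases mem_insert.1 h₂ with rfl | h₂
  · rw [mem_singleton] at hb hd
    omega
  exact h B₁ h₁ B₂ h₂ a ha c hc b hb d hd hab hbc hcd

lemma IsNonCrossing.replaceBlock_of_subset (h : IsNonCrossing P) (hB : B ∈ P) (hB' : B' ⊆ B) :
    IsNonCrossing (replaceBlock P B B') := by
  intro B₁ h₁ B₂ h₂ a ha c hc b hb d hd hab hbc hcd
  rcases mem_insert.1 h₁ with rfl | hB₁ <;> rcases mem_insert.1 h₂ with rfl | hB₂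
  · rfl
  · exact absurd (h B hB B₂ (mem_of_mem_erase hB₂) a (hB' ha) c (hB' hc) b hb d hd hab hbc hcd)
      (ne_of_mem_erase hB₂).symm
  · exact absurd (h B₁ (mem_of_mem_erase hB₁) B hB a ha c hc b (hB' hb) d (hB' hd) hab hbc hcd)
      (ne_of_mem_erase hB₁)
  · exact h B₁ (mem_of_mem_erase hB₁) B₂ (mem_of_mem_erase hB₂) a ha c hc b hb d hd
      hab hbc hcd

/-- A crossing through the new element `e` would have to pass over `max T`. -/
lemma IsNonCrossing.replaceBlock_insert (h : IsNonCrossing P) (hP : IsPartition S P)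
    (hT : T ∈ P) (hS : ∀ x ∈ S, x < e) (hsplit : SplitsAt P (T.sup id)) :
    IsNonCrossing (replaceBlock P T (insert e T)) := by
  have hlt : ∀ C ∈ P.erase T, ∀ x ∈ C, x < e := fun C hC x hx =>
    hS x (hP.subset C (mem_of_mem_erase hC) hx)
  intro B₁ h₁ B₂ h₂ a ha c hc b hb d hd hab hbc hcd
  rcases mem_insert.1 h₁ with rfl | hB₁ <;> rcases mem_insert.1 h₂ with rfl | hB₂
  · rfl
  · have hde := hlt B₂ hB₂ d hd
    have haT : a ∈ T := (mem_insert.1 ha).resolve_left (by omega)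
    have hcT : c ∈ T := (mem_insert.1 hc).resolve_left (by omega)
    exact absurd (h T hT B₂ (mem_of_mem_erase hB₂) a haT c hcT b hb d hd hab hbc hcd).symm
      (ne_of_mem_erase hB₂)
  · have hce := hlt B₁ hB₁ c hc
    have hbT : b ∈ T := (mem_insert.1 hb).resolve_left (by omega)
    have hB₁P := mem_of_mem_erase hB₁
    refine absurd ?_ (ne_of_mem_erase hB₁)
    rcases mem_insert.1 hd with rfl | hdT
    · have hcmax : c ≤ T.sup id :=
        hsplit B₁ hB₁P a ha c hc ((hab.trans_le (le_sup (f := id) hbT)).le)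
      rcases hcmax.lt_or_eq with hcmax | hcmax
      · exact h B₁ hB₁P T hT a ha c hc b hbT _ (sup_id_mem (hP.nonempty T hT)) hab hbc hcmax
      · exact hP.eq_of_mem_of_mem hB₁P hT hc (hcmax ▸ sup_id_mem (hP.nonempty T hT))
    · exact h B₁ hB₁P T hT a ha c hc b hbT d hdT hab hbc hcd
  · exact h B₁ (mem_of_mem_erase hB₁) B₂ (mem_of_mem_erase hB₂) a ha c hc b hb d hd
      hab hbc hcd

/-- A block straddling the new maximum would cross `B`. -/
lemma IsNonCrossing.splitsAt_replaceBlock_erase (h : IsNonCrossing P) (hP : IsPartition S P)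
    (hB : B ∈ P) (he : e ∈ B) (hS : ∀ x ∈ S, x ≤ e) (hne : (B.erase e).Nonempty) :
    SplitsAt (replaceBlock P B (B.erase e)) ((B.erase e).sup id) := by
  have ht := sup_id_mem hne
  intro C hC x hx y hy hxt
  rcases mem_insert.1 hC with rfl | hC
  · exact le_sup (f := id) hy
  have hCP := mem_of_mem_erase hC
  have hCB := ne_of_mem_erase hC
  by_contra! hty
  have hxt' : x < (B.erase e).sup id := hxt.lt_of_ne fun hxe =>
    hCB (hP.eq_of_mem_of_mem hCP hB hx (hxe ▸ mem_of_mem_erase ht))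
  have hye : y < e := (hS y (hP.subset C hCP hy)).lt_of_ne fun hye =>
    hCB (hP.eq_of_mem_of_mem hCP hB hy (hye ▸ he))
  exact hCB (h C hCP B hB x hx y hy _ (mem_of_mem_erase ht) e he hxt' hty hye)

lemma IsPartition.sup_lt_sup_erase (hP : IsPartition S P) (hS : ∀ x ∈ S, x ≤ e) (hB : B ∈ P)
    (hC : C ∈ P) (he : e ∈ B) (hne : (B.erase e).Nonempty) (hCB : C ≠ B)
    (hsplit : SplitsAt P (C.sup id)) : C.sup id < (B.erase e).sup id := by
  by_contra! hle
  have hmax := sup_id_mem (hP.nonempty C hC)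
  have hec := hsplit B hB _ (mem_of_mem_erase (sup_id_mem hne)) e he hle
  have : C.sup id = e := le_antisymm (hS _ (hP.subset C hC hmax)) hec
  exact hCB (hP.eq_of_mem_of_mem hC hB (this ▸ hmax) he)

end NonCrossing

lemma blockWt_singleton (a : ℕ) : blockWt {a} = 0 := by
  simp [blockWt]

lemma blockWt_of_two_le {B : Finset ℕ} (h2 : 2 ≤ B.card) (hB : B.Nonempty) :
    blockWt B = (∑ j ∈ B, 2 * j) + 1 - (B.min' hB + B.max' hB + B.card) := by
  rw [blockWt, dif_pos h2]

lemma blockWt_insert_succ {B : Finset ℕ} {e : ℕ} (hB : B.Nonempty)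
    (hle : ∀ x ∈ B, x ≤ e) :
    blockWt (insert (e + 1) B) = blockWt B + B.sup id + e := by
  have hnotin : e + 1 ∉ B := fun h => by have := hle _ h; omega
  have hne : (insert (e + 1) B).Nonempty := insert_nonempty _ _
  have hmax : (insert (e + 1) B).max' hne = e + 1 :=
    le_antisymm (max'_le _ _ _ fun y hy => by
      rcases mem_insert.1 hy with rfl | hy
      exacts [le_rfl, (hle y hy).trans e.le_succ]) (le_max' _ _ (mem_insert_self _ _))
  have hmin : (insert (e + 1) B).min' hne = B.min' hB := by
    rw [min'_insert _ _ hB, min_eq_right ((hle _ (min'_mem B hB)).trans e.le_succ)]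
  have hcard : B.card ≤ B.max' hB + 1 := by
    simpa using card_le_card fun x hx => mem_range.2 (Nat.lt_succ_of_le (le_max' B x hx))
  have hcard' : 2 ≤ (insert (e + 1) B).card := by
    rw [card_insert_of_notMem hnotin]
    exact Nat.succ_le_succ hB.card_pos
  rw [blockWt_of_two_le hcard' hne, hmax, hmin, sum_insert hnotin, card_insert_of_notMem hnotin,
    ← sup'_eq_sup hB, ← max'_eq_sup']
  rcases Nat.lt_or_ge B.card 2 with h1 | h2
  · obtain ⟨a, rfl⟩ := card_eq_one.1 (show B.card = 1 by have := hB.card_pos; omega)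
    simp only [sum_singleton, min'_singleton, max'_singleton, card_singleton, blockWt_singleton]
    omega
  · have hsum : 2 * B.min' hB + 2 * B.max' hB ≤ ∑ j ∈ B, 2 * j := by
      have hlt := min'_lt_max'_of_card B h2
      simpa [sum_pair hlt.ne] using sum_le_sum_of_subset (f := fun j => 2 * j)
        (insert_subset (min'_mem B hB) (singleton_subset_iff.2 (max'_mem B hB)))
    rw [blockWt_of_two_le h2 hB]
    omega

/-! ### Marked non-crossing partitions -/

def topBlock (M : Finset (Finset ℕ)) : Finset ℕ :=
  blockOf M (M.sup fun B => B.sup id)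

open scoped Classical

section Marked

variable {n : ℕ} {S B T : Finset ℕ} {P M M' : Finset (Finset ℕ)}

lemma topBlock_eq (hT : T ∈ M) (hTne : T.Nonempty)
    (hlt : ∀ C ∈ M, C ≠ T → C.sup id < T.sup id) : topBlock M = T := by
  have hsup : (M.sup fun B => B.sup id) = T.sup id :=
    le_antisymm (Finset.sup_le fun C hC => (eq_or_ne C T).elim (fun h => h ▸ le_rfl)
      fun h => (hlt C hC h).le) (le_sup (f := fun B => B.sup id) hT)
  rw [topBlock, hsup]
  refine blockOf_eq hT (sup_id_mem hTne) fun C hC hTC => ?_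
  by_contra hCT
  exact absurd (le_sup (f := id) hTC) (hlt C hC hCT).not_ge

lemma IsPartition.topBlock_spec (hP : IsPartition S P) (hM : M ⊆ P) (hne : M.Nonempty) :
    topBlock M ∈ M ∧ ∀ C ∈ M, C ≠ topBlock M → C.sup id < (topBlock M).sup id := by
  obtain ⟨T, hT, hmax⟩ := exists_max_image M (fun B => B.sup id) hne
  have hlt : ∀ C ∈ M, C ≠ T → C.sup id < T.sup id := fun C hC hCT =>
    (hmax C hC).lt_of_ne fun h => hCT <| hP.eq_of_mem_of_mem (hM hC) (hM hT)
      (sup_id_mem (hP.nonempty C (hM hC))) (h ▸ sup_id_mem (hP.nonempty T (hM hT)))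
  rw [topBlock_eq hT (hP.nonempty T (hM hT)) hlt]
  exact ⟨hT, hlt⟩

structure IsMarkedNC (n : ℕ) (P M : Finset (Finset ℕ)) : Prop where
  isPartition : IsPartition (Icc 1 n) P
  nonCrossing : IsNonCrossing P
  subset : M ⊆ P
  splitsAt : ∀ B ∈ M, SplitsAt P (B.sup id)

namespace IsMarkedNC

lemma le_of_mem (h : IsMarkedNC n P M) {C : Finset ℕ} {x : ℕ} (hC : C ∈ P) (hx : x ∈ C) :
    x ≤ n :=
  (mem_Icc.1 (h.isPartition.subset C hC hx)).2

lemma mono_right (h : IsMarkedNC n P M) (hM : M' ⊆ M) : IsMarkedNC n P M' :=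
  ⟨h.isPartition, h.nonCrossing, hM.trans h.subset, fun B hB => h.splitsAt B (hM hB)⟩

lemma erase_singleton (h : IsMarkedNC (n + 1) P M) (hs : {n + 1} ∈ P) :
    IsMarkedNC n (P.erase {n + 1}) (M.erase {n + 1}) where
  isPartition := by
    have := h.isPartition.erase hs
    rwa [show Icc 1 (n + 1) \ {n + 1} = Icc 1 n by
      ext x; simp only [mem_sdiff, mem_Icc, mem_singleton]; omega] at this
  nonCrossing := h.nonCrossing.mono (erase_subset _ _)
  subset := erase_subset_erase _ h.subset
  splitsAt B hB := (h.splitsAt B (mem_of_mem_erase hB)).mono (erase_subset _ _)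

lemma insert_singleton (h : IsMarkedNC n P M) :
    IsMarkedNC (n + 1) (insert {n + 1} P) (insert {n + 1} M) where
  isPartition := by
    have := h.isPartition.insert (singleton_nonempty (n + 1)) (by simp)
    rwa [show Icc 1 n ∪ {n + 1} = Icc 1 (n + 1) by
      ext x; simp only [union_singleton, mem_insert, mem_Icc]; omega] at this
  nonCrossing := h.nonCrossing.insert_singleton _
  subset := insert_subset_insert _ h.subset
  splitsAt B hB := by
    rcases mem_insert.1 hB with rfl | hB
    · refine splitsAt_of_forall_le fun C hC y hy => ?_
      rcases mem_insert.1 hC with rfl | hC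
      · simp_all
      · exact (h.le_of_mem hC hy).trans (by simp)
    · exact (h.splitsAt B hB).insert_singleton _

lemma detach (h : IsMarkedNC (n + 1) P M) (hB : B ∈ P) (he : n + 1 ∈ B)
    (hne : (B.erase (n + 1)).Nonempty) :
    IsMarkedNC n (replaceBlock P B (B.erase (n + 1))) (replaceBlock M B (B.erase (n + 1))) where
  isPartition := by
    have := h.isPartition.replaceBlock hB hne (disjoint_sdiff.mono_left (erase_subset _ _))
    have hsub := h.isPartition.subset B hB
    rwa [show Icc 1 (n + 1) \ B ∪ B.erase (n + 1) = Icc 1 n by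
      ext x
      have := @hsub x
      simp only [mem_union, mem_sdiff, mem_Icc, mem_erase] at this ⊢
      by_cases hx : x ∈ B <;> by_cases hxe : x = n + 1 <;> simp_all <;> omega] at this
  nonCrossing := h.nonCrossing.replaceBlock_of_subset hB (erase_subset _ _)
  subset := replaceBlock_subset_replaceBlock h.subset
  splitsAt C hC := by
    rcases mem_insert.1 hC with rfl | hC
    · exact h.nonCrossing.splitsAt_replaceBlock_erase h.isPartition hB he
        (fun x hx => (mem_Icc.1 hx).2) hne
    · exact (h.splitsAt C (mem_of_mem_erase hC)).replaceBlock_of_subset hB (erase_subset _ _)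

lemma attach (h : IsMarkedNC n P M) (hT : T ∈ M)
    (htop : ∀ C ∈ M, C ≠ T → C.sup id < T.sup id) :
    IsMarkedNC (n + 1) (replaceBlock P T (insert (n + 1) T))
      (replaceBlock M T (insert (n + 1) T)) := by
  have hTP := h.subset hT
  have hpart : IsPartition (Icc 1 (n + 1)) (replaceBlock P T (insert (n + 1) T)) := by
    have hsub := h.isPartition.subset T hTP
    have := h.isPartition.replaceBlock hTP (insert_nonempty (n + 1) T)
      (show Disjoint (insert (n + 1) T) (Icc 1 n \ T) by
        rw [disjoint_insert_left]; simp [disjoint_sdiff])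
    rwa [show Icc 1 n \ T ∪ insert (n + 1) T = Icc 1 (n + 1) by
      ext x
      have := @hsub x
      simp only [mem_union, mem_sdiff, mem_Icc, mem_insert] at this ⊢
      by_cases hx : x ∈ T <;> simp_all <;> omega] at this
  refine ⟨hpart, h.nonCrossing.replaceBlock_insert h.isPartition hTP
    (fun x hx => Nat.lt_succ_of_le (mem_Icc.1 hx).2) (h.splitsAt T hT),
    replaceBlock_subset_replaceBlock h.subset, fun C hC => ?_⟩
  rcases mem_insert.1 hC with rfl | hC
  · exact splitsAt_of_forall_le fun D hD y hy =>
      (mem_Icc.1 (hpart.subset D hD hy)).2.trans (le_sup (f := id) (mem_insert_self _ _))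
  have hCM := mem_of_mem_erase hC
  have hlt := htop C hCM (ne_of_mem_erase hC)
  have hCn : C.sup id ≤ n := Finset.sup_le fun x hx => h.le_of_mem (h.subset hCM) hx
  intro D hD x hx y hy hxt
  rcases mem_insert.1 hD with rfl | hD
  · exfalso
    rcases mem_insert.1 hx with rfl | hxT
    · omega
    · have : T.sup id ≤ C.sup id :=
        Finset.sup_le fun z hz => h.splitsAt C hCM T hTP x hxT z hz hxt
      omega
  · exact h.splitsAt C hCM D (mem_of_mem_erase hD) x hx y hy hxt

end IsMarkedNC


noncomputable def markedNC (n h : ℕ) : Finset (Finset (Finset ℕ) × Finset (Finset ℕ)) :=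
  ((Icc 1 n).powerset.powerset ×ˢ (Icc 1 n).powerset.powerset).filter
    fun x => IsMarkedNC n x.1 x.2 ∧ x.2.card = h

def markedWt (P M : Finset (Finset ℕ)) : ℕ :=
  ∑ B ∈ P, blockWt B + ∑ B ∈ M, B.sup id

noncomputable def markedPoly (n h : ℕ) : ℕ[X] :=
  ∑ x ∈ markedNC n h, X ^ markedWt x.1 x.2

lemma mem_markedNC {h : ℕ} {x : Finset (Finset ℕ) × Finset (Finset ℕ)} :
    x ∈ markedNC n h ↔ IsMarkedNC n x.1 x.2 ∧ x.2.card = h := by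
  refine mem_filter.trans ⟨And.right, fun hx => ⟨?_, hx⟩⟩
  have hsub : x.1 ⊆ (Icc 1 n).powerset := fun B hB =>
    mem_powerset.2 (hx.1.isPartition.subset B hB)
  exact mem_product.2 ⟨mem_powerset.2 hsub, mem_powerset.2 (hx.1.subset.trans hsub)⟩

namespace IsMarkedNC

lemma succ_notMem (h : IsMarkedNC n P M) (hB : B ∈ P) : n + 1 ∉ B :=
  fun hn => by have := h.le_of_mem hB hn; omega

lemma blockOf_mem (h : IsMarkedNC (n + 1) P M) :
    blockOf P (n + 1) ∈ P ∧ n + 1 ∈ blockOf P (n + 1) :=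
  h.isPartition.blockOf_mem (by simp)

lemma erase_notMem (h : IsMarkedNC (n + 1) P M) (hB : B ∈ P) (he : n + 1 ∈ B)
    (hne : (B.erase (n + 1)).Nonempty) : B.erase (n + 1) ∉ P := fun hmem => by
  obtain ⟨x, hx⟩ := hne
  have hBB := h.isPartition.eq_of_mem_of_mem hmem hB hx (mem_of_mem_erase hx)
  have := notMem_erase (n + 1) B
  rw [hBB] at this
  exact this he

lemma sum_blockWt_eq (h : IsMarkedNC (n + 1) P M) (hB : B ∈ P) (he : n + 1 ∈ B)
    (hne : (B.erase (n + 1)).Nonempty) :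
    ∑ C ∈ P, blockWt C
      = ∑ C ∈ replaceBlock P B (B.erase (n + 1)), blockWt C + (B.erase (n + 1)).sup id + n := by
  have hsum := sum_replaceBlock_add blockWt hB (h.erase_notMem hB he hne)
  have hwt := blockWt_insert_succ hne fun x hx =>
    Nat.le_of_lt_succ ((h.le_of_mem hB (mem_of_mem_erase hx)).lt_of_ne (ne_of_mem_erase hx))
  rw [insert_erase he] at hwt
  omega

lemma blockOf_eq_singleton (h : IsMarkedNC (n + 1) P M) (hs : {n + 1} ∈ P) :
    blockOf P (n + 1) = {n + 1} :=
  h.isPartition.blockOf_eq hs (mem_singleton_self _)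

lemma topBlock_replaceBlock_erase (h : IsMarkedNC (n + 1) P M) (hB : B ∈ P) (he : n + 1 ∈ B)
    (hne : (B.erase (n + 1)).Nonempty) :
    topBlock (replaceBlock M B (B.erase (n + 1))) = B.erase (n + 1) := by
  refine topBlock_eq (mem_insert_self _ _) hne fun C hC hCB => ?_
  have hC' := mem_of_mem_erase ((mem_insert.1 hC).resolve_left hCB)
  exact h.isPartition.sup_lt_sup_erase (fun x hx => (mem_Icc.1 hx).2) hB (h.subset hC') he hne
    (ne_of_mem_erase ((mem_insert.1 hC).resolve_left hCB)) (h.splitsAt C hC')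

lemma blockOf_attach (h : IsMarkedNC n P M) :
    blockOf (replaceBlock P T (insert (n + 1) T)) (n + 1) = insert (n + 1) T :=
  blockOf_eq (mem_insert_self _ _) (mem_insert_self _ _) fun _ hC heC =>
    (mem_insert.1 hC).resolve_right fun hC' => h.succ_notMem (mem_of_mem_erase hC') heC

lemma singleton_notMem_attach (h : IsMarkedNC n P M) (hT : T ∈ P) :
    {n + 1} ∉ replaceBlock P T (insert (n + 1) T) := by
  intro hs
  rcases mem_insert.1 hs with hs | hs
  · obtain ⟨t, ht⟩ := h.isPartition.nonempty T hT
    have := h.le_of_mem hT ht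
    have := mem_singleton.1 (hs ▸ mem_insert_of_mem ht)
    omega
  · exact h.succ_notMem (mem_of_mem_erase hs) (mem_singleton_self _)

end IsMarkedNC

lemma sum_markedNC_singleton_unmarked (n h : ℕ) :
    ∑ x ∈ (markedNC (n + 1) h).filter
        (fun x => {n + 1} ∈ x.1 ∧ blockOf x.1 (n + 1) ∉ x.2),
      X ^ markedWt x.1 x.2 = markedPoly n h := by
  refine sum_nbij' (fun x => (x.1.erase {n + 1}, x.2)) (fun x => (insert {n + 1} x.1, x.2))
    ?_ ?_ ?_ ?_ ?_
  · rintro ⟨P, M⟩ hx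
    simp only [mem_filter, mem_markedNC] at hx ⊢
    obtain ⟨⟨hPM, hcard⟩, hs, hm⟩ := hx
    rw [hPM.blockOf_eq_singleton hs] at hm
    exact ⟨erase_eq_of_notMem hm ▸ hPM.erase_singleton hs, hcard⟩
  · rintro ⟨P, M⟩ hx
    simp only [mem_filter, mem_markedNC] at hx ⊢
    obtain ⟨hPM, hcard⟩ := hx
    have hPM' := hPM.insert_singleton.mono_right (subset_insert _ _)
    refine ⟨⟨hPM', hcard⟩, mem_insert_self _ _, ?_⟩
    rw [hPM'.blockOf_eq_singleton (mem_insert_self _ _)]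
    exact fun hs => hPM.succ_notMem (hPM.subset hs) (mem_singleton_self _)
  · rintro ⟨P, M⟩ hx
    simp only [mem_filter] at hx
    simp only [insert_erase hx.2.1]
  · rintro ⟨P, M⟩ hx
    simp only [mem_markedNC] at hx
    simp only [erase_insert fun hs => hx.1.succ_notMem hs (mem_singleton_self _)]
  · rintro ⟨P, M⟩ hx
    simp only [markedWt, sum_erase _ (blockWt_singleton (n + 1))]

lemma sum_markedNC_singleton_marked (n h : ℕ) :
    ∑ x ∈ (markedNC (n + 1) (h + 1)).filter
        (fun x => {n + 1} ∈ x.1 ∧ blockOf x.1 (n + 1) ∈ x.2),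
      X ^ markedWt x.1 x.2 = X ^ (n + 1) * markedPoly n h := by
  rw [markedPoly, mul_sum]
  refine sum_nbij' (fun x => (x.1.erase {n + 1}, x.2.erase {n + 1}))
    (fun x => (insert {n + 1} x.1, insert {n + 1} x.2)) ?_ ?_ ?_ ?_ ?_
  · rintro ⟨P, M⟩ hx
    simp only [mem_filter, mem_markedNC] at hx ⊢
    obtain ⟨⟨hPM, hcard⟩, hs, hm⟩ := hx
    rw [hPM.blockOf_eq_singleton hs] at hm
    exact ⟨hPM.erase_singleton hs, by rw [card_erase_of_mem hm, hcard, Nat.add_sub_cancel]⟩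
  · rintro ⟨P, M⟩ hx
    simp only [mem_filter, mem_markedNC] at hx ⊢
    obtain ⟨hPM, hcard⟩ := hx
    have hsM : {n + 1} ∉ M := fun hs => hPM.succ_notMem (hPM.subset hs) (mem_singleton_self _)
    refine ⟨⟨hPM.insert_singleton, by rw [card_insert_of_notMem hsM, hcard]⟩,
      mem_insert_self _ _, ?_⟩
    rw [hPM.insert_singleton.blockOf_eq_singleton (mem_insert_self _ _)]
    exact mem_insert_self _ _
  · rintro ⟨P, M⟩ hx
    simp only [mem_filter, mem_markedNC] at hx
    obtain ⟨⟨hPM, -⟩, hs, hm⟩ := hx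
    rw [hPM.blockOf_eq_singleton hs] at hm
    simp only [insert_erase hs, insert_erase hm]
  · rintro ⟨P, M⟩ hx
    simp only [mem_markedNC] at hx
    have hsP : {n + 1} ∉ P := fun hs => hx.1.succ_notMem hs (mem_singleton_self _)
    simp only [erase_insert hsP, erase_insert fun hs => hsP (hx.1.subset hs)]
  · rintro ⟨P, M⟩ hx
    simp only [mem_filter, mem_markedNC] at hx
    obtain ⟨⟨hPM, -⟩, hs, hm⟩ := hx
    rw [hPM.blockOf_eq_singleton hs] at hm
    have hM := add_sum_erase M (fun B => B.sup id) hm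
    rw [sup_singleton, id] at hM
    rw [← pow_add, markedWt, markedWt, sum_erase _ (blockWt_singleton (n + 1)), ← hM]
    ring

lemma sum_markedNC_nonsingleton_unmarked (n h : ℕ) :
    ∑ x ∈ (markedNC (n + 1) h).filter
        (fun x => {n + 1} ∉ x.1 ∧ blockOf x.1 (n + 1) ∉ x.2),
      X ^ markedWt x.1 x.2 = X ^ n * markedPoly n (h + 1) := by
  rw [markedPoly, mul_sum]
  refine sum_nbij'
    (fun x => (replaceBlock x.1 (blockOf x.1 (n + 1)) ((blockOf x.1 (n + 1)).erase (n + 1)),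
      replaceBlock x.2 (blockOf x.1 (n + 1)) ((blockOf x.1 (n + 1)).erase (n + 1))))
    (fun x => (replaceBlock x.1 (topBlock x.2) (insert (n + 1) (topBlock x.2)),
      x.2.erase (topBlock x.2))) ?_ ?_ ?_ ?_ ?_
  · rintro ⟨P, M⟩ hx
    simp only [mem_filter, mem_markedNC] at hx ⊢
    obtain ⟨⟨hPM, hcard⟩, hs, hm⟩ := hx
    obtain ⟨hB, he⟩ := hPM.blockOf_mem
    have hne := erase_nonempty_of_singleton_notMem hB he hs
    refine ⟨hPM.detach hB he hne, ?_⟩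
    rw [replaceBlock_of_notMem hm, card_insert_of_notMem
      fun h => hPM.erase_notMem hB he hne (hPM.subset h), hcard]
  · rintro ⟨P, M⟩ hx
    simp only [mem_filter, mem_markedNC] at hx ⊢
    obtain ⟨hPM, hcard⟩ := hx
    obtain ⟨hT, htop⟩ := hPM.isPartition.topBlock_spec hPM.subset (card_pos.1 (by omega))
    have hPM' := (hPM.attach hT htop).mono_right (subset_insert _ _)
    refine ⟨⟨hPM', by rw [card_erase_of_mem hT, hcard, Nat.add_sub_cancel]⟩,
      hPM.singleton_notMem_attach (hPM.subset hT), ?_⟩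
    rw [hPM.blockOf_attach]
    exact fun hT' => hPM.succ_notMem (hPM.subset (mem_of_mem_erase hT')) (mem_insert_self _ _)
  · rintro ⟨P, M⟩ hx
    simp only [mem_filter, mem_markedNC] at hx
    obtain ⟨⟨hPM, -⟩, hs, hm⟩ := hx
    obtain ⟨hB, he⟩ := hPM.blockOf_mem
    have hne := erase_nonempty_of_singleton_notMem hB he hs
    dsimp only
    rw [hPM.topBlock_replaceBlock_erase hB he hne, insert_erase he,
      replaceBlock_replaceBlock hB (hPM.erase_notMem hB he hne), replaceBlock_of_notMem hm,
      erase_insert fun h => hPM.erase_notMem hB he hne (hPM.subset h)]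
  · rintro ⟨P, M⟩ hx
    simp only [mem_markedNC] at hx
    obtain ⟨hPM, hcard⟩ := hx
    obtain ⟨hT, -⟩ := hPM.isPartition.topBlock_spec hPM.subset (card_pos.1 (by omega))
    dsimp only
    rw [hPM.blockOf_attach, erase_insert (hPM.succ_notMem (hPM.subset hT)),
      replaceBlock_replaceBlock (hPM.subset hT) fun h => hPM.succ_notMem h (mem_insert_self _ _),
      replaceBlock_of_notMem fun h => hPM.succ_notMem (hPM.subset (mem_of_mem_erase h))
        (mem_insert_self _ _), insert_erase hT]
  · rintro ⟨P, M⟩ hx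
    simp only [mem_filter, mem_markedNC] at hx
    obtain ⟨⟨hPM, -⟩, hs, hm⟩ := hx
    obtain ⟨hB, he⟩ := hPM.blockOf_mem
    have hne := erase_nonempty_of_singleton_notMem hB he hs
    have hP := hPM.sum_blockWt_eq hB he hne
    rw [← pow_add, markedWt, markedWt, replaceBlock_of_notMem hm,
      sum_insert fun h => hPM.erase_notMem hB he hne (hPM.subset h), hP]
    ring

lemma sum_markedNC_nonsingleton_marked (n h : ℕ) :
    ∑ x ∈ (markedNC (n + 1) (h + 1)).filter
        (fun x => {n + 1} ∉ x.1 ∧ blockOf x.1 (n + 1) ∈ x.2),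
      X ^ markedWt x.1 x.2 = X ^ (2 * n + 1) * markedPoly n (h + 1) := by
  rw [markedPoly, mul_sum]
  refine sum_nbij'
    (fun x => (replaceBlock x.1 (blockOf x.1 (n + 1)) ((blockOf x.1 (n + 1)).erase (n + 1)),
      replaceBlock x.2 (blockOf x.1 (n + 1)) ((blockOf x.1 (n + 1)).erase (n + 1))))
    (fun x => (replaceBlock x.1 (topBlock x.2) (insert (n + 1) (topBlock x.2)),
      replaceBlock x.2 (topBlock x.2) (insert (n + 1) (topBlock x.2)))) ?_ ?_ ?_ ?_ ?_
  · rintro ⟨P, M⟩ hx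
    simp only [mem_filter, mem_markedNC] at hx ⊢
    obtain ⟨⟨hPM, hcard⟩, hs, hm⟩ := hx
    obtain ⟨hB, he⟩ := hPM.blockOf_mem
    have hne := erase_nonempty_of_singleton_notMem hB he hs
    refine ⟨hPM.detach hB he hne, ?_⟩
    rw [card_replaceBlock hm fun h => hPM.erase_notMem hB he hne (hPM.subset h), hcard]
  · rintro ⟨P, M⟩ hx
    simp only [mem_filter, mem_markedNC] at hx ⊢
    obtain ⟨hPM, hcard⟩ := hx
    obtain ⟨hT, htop⟩ := hPM.isPartition.topBlock_spec hPM.subset (card_pos.1 (by omega))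
    refine ⟨⟨hPM.attach hT htop, ?_⟩, hPM.singleton_notMem_attach (hPM.subset hT), ?_⟩
    · rw [card_replaceBlock hT fun h => hPM.succ_notMem (hPM.subset h) (mem_insert_self _ _),
        hcard]
    · rw [hPM.blockOf_attach]
      exact mem_insert_self _ _
  · rintro ⟨P, M⟩ hx
    simp only [mem_filter, mem_markedNC] at hx
    obtain ⟨⟨hPM, -⟩, hs, hm⟩ := hx
    obtain ⟨hB, he⟩ := hPM.blockOf_mem
    have hne := erase_nonempty_of_singleton_notMem hB he hs
    have hB' := hPM.erase_notMem hB he hne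
    dsimp only
    rw [hPM.topBlock_replaceBlock_erase hB he hne, insert_erase he,
      replaceBlock_replaceBlock hB hB', replaceBlock_replaceBlock hm fun h => hB' (hPM.subset h)]
  · rintro ⟨P, M⟩ hx
    simp only [mem_markedNC] at hx
    obtain ⟨hPM, hcard⟩ := hx
    obtain ⟨hT, -⟩ := hPM.isPartition.topBlock_spec hPM.subset (card_pos.1 (by omega))
    have hT' : insert (n + 1) (topBlock M) ∉ P := fun h => hPM.succ_notMem h (mem_insert_self _ _)
    dsimp only
    rw [hPM.blockOf_attach, erase_insert (hPM.succ_notMem (hPM.subset hT)),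
      replaceBlock_replaceBlock (hPM.subset hT) hT',
      replaceBlock_replaceBlock hT fun h => hT' (hPM.subset h)]
  · rintro ⟨P, M⟩ hx
    simp only [mem_filter, mem_markedNC] at hx
    obtain ⟨⟨hPM, -⟩, hs, hm⟩ := hx
    obtain ⟨hB, he⟩ := hPM.blockOf_mem
    have hne := erase_nonempty_of_singleton_notMem hB he hs
    have hP := hPM.sum_blockWt_eq hB he hne
    have hM := sum_replaceBlock_add (fun B => B.sup id) hm
      fun h => hPM.erase_notMem hB he hne (hPM.subset h)
    have hsup : (blockOf P (n + 1)).sup id = n + 1 :=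
      le_antisymm (Finset.sup_le fun x hx => hPM.le_of_mem hB hx) (le_sup (f := id) he)
    dsimp only at hM ⊢
    rw [← pow_add, markedWt, markedWt, hP]
    congr 1
    omega

lemma markedPoly_succ_eq_sum (n h : ℕ) :
    markedPoly (n + 1) h =
      ∑ x ∈ (markedNC (n + 1) h).filter
            (fun x => {n + 1} ∈ x.1 ∧ blockOf x.1 (n + 1) ∈ x.2), X ^ markedWt x.1 x.2
        + ∑ x ∈ (markedNC (n + 1) h).filter
            (fun x => {n + 1} ∈ x.1 ∧ blockOf x.1 (n + 1) ∉ x.2), X ^ markedWt x.1 x.2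
        + (∑ x ∈ (markedNC (n + 1) h).filter
            (fun x => {n + 1} ∉ x.1 ∧ blockOf x.1 (n + 1) ∈ x.2), X ^ markedWt x.1 x.2
          + ∑ x ∈ (markedNC (n + 1) h).filter
            (fun x => {n + 1} ∉ x.1 ∧ blockOf x.1 (n + 1) ∉ x.2), X ^ markedWt x.1 x.2) := by
  rw [markedPoly, ← sum_filter_add_sum_filter_not _ fun x => {n + 1} ∈ x.1,
    ← sum_filter_add_sum_filter_not ((markedNC (n + 1) h).filter fun x => {n + 1} ∈ x.1)
      fun x => blockOf x.1 (n + 1) ∈ x.2,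
    ← sum_filter_add_sum_filter_not ((markedNC (n + 1) h).filter fun x => {n + 1} ∉ x.1)
      fun x => blockOf x.1 (n + 1) ∈ x.2]
  simp only [filter_filter]

lemma filter_markedNC_zero_eq_empty (n : ℕ) (p : Finset (Finset ℕ) → Prop) [DecidablePred p] :
    (markedNC (n + 1) 0).filter (fun x => p x.1 ∧ blockOf x.1 (n + 1) ∈ x.2) = ∅ :=
  filter_false_of_mem fun x hx ⟨_, hm⟩ => by
    rw [card_eq_zero.1 (mem_markedNC.1 hx).2] at hm
    exact notMem_empty _ hm

lemma markedPoly_succ_zero (n : ℕ) :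
    markedPoly (n + 1) 0 = markedPoly n 0 + X ^ n * markedPoly n 1 := by
  rw [markedPoly_succ_eq_sum, filter_markedNC_zero_eq_empty n (fun P => {n + 1} ∈ P),
    filter_markedNC_zero_eq_empty n (fun P => {n + 1} ∉ P), sum_markedNC_singleton_unmarked,
    sum_markedNC_nonsingleton_unmarked]
  simp only [sum_empty, zero_add]

lemma markedPoly_succ_succ (n h : ℕ) :
    markedPoly (n + 1) (h + 1) = markedPoly n (h + 1) + X ^ (n + 1) * markedPoly n h
      + X ^ n * markedPoly n (h + 2) + X ^ (2 * n + 1) * markedPoly n (h + 1) := by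
  rw [markedPoly_succ_eq_sum, sum_markedNC_singleton_marked, sum_markedNC_singleton_unmarked,
    sum_markedNC_nonsingleton_marked, sum_markedNC_nonsingleton_unmarked]
  ring

lemma IsMarkedNC.eq_empty (h : IsMarkedNC 0 P M) : P = ∅ ∧ M = ∅ := by
  have hP : P = ∅ := IsPartition.eq_empty (by simpa using h.isPartition)
  exact ⟨hP, subset_empty.1 (hP ▸ h.subset)⟩

lemma markedPoly_zero (h : ℕ) : markedPoly 0 h = if h = 0 then 1 else 0 := by
  have hmem : ∀ x ∈ markedNC 0 h, x = (∅, ∅) := fun x hx => by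
    obtain ⟨hP, hM⟩ := (mem_markedNC.1 hx).1.eq_empty
    exact Prod.ext hP hM
  split_ifs with h0
  · subst h0
    have hempty : ((∅, ∅) : Finset (Finset ℕ) × Finset (Finset ℕ)) ∈ markedNC 0 0 :=
      mem_markedNC.2
        ⟨⟨⟨by simp, by simp, by simp⟩, by simp [IsNonCrossing], by simp, by simp⟩, rfl⟩
    rw [markedPoly, sum_eq_single_of_mem _ hempty fun x hx hne => absurd (hmem x hx) hne]
    simp [markedWt]
  · refine sum_eq_zero fun x hx => absurd (mem_markedNC.1 hx).2 ?_
    rw [hmem x hx]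
    exact Ne.symm h0

end Marked

lemma markedPoly_map (n h : ℕ) : (markedPoly n h).map (Nat.castRingHom ℤ) = qBallot n h := by
  induction n generalizing h with
  | zero =>
    rw [markedPoly_zero, qBallot_zero]
    split_ifs <;> simp
  | succ n ih =>
    rcases h with _ | h
    · simp only [markedPoly_succ_zero, qBallot_succ_zero, Polynomial.map_add, Polynomial.map_mul,
        Polynomial.map_pow, map_X, ih]
    · simp only [markedPoly_succ_succ, qBallot_succ_succ, Polynomial.map_add, Polynomial.map_mul,
        Polynomial.map_pow, map_X, ih]

lemma isPartitionOf_iff {n : ℕ} {P : Finset (Finset ℕ)} :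
    IsPartitionOf n P ↔ IsPartition (Icc 1 n) P :=
  ⟨fun ⟨h₁, h₂, h₃⟩ => ⟨h₁, h₂, h₃⟩, fun ⟨h₁, h₂, h₃⟩ => ⟨h₁, h₂, h₃⟩⟩

lemma sum_ncPartitions_eq_markedPoly (n : ℕ) :
    ∑ P ∈ ((Icc 1 n).powerset.powerset).filter (fun P => IsPartitionOf n P ∧ IsNonCrossing P),
      (X : ℕ[X]) ^ (∑ B ∈ P, blockWt B) = markedPoly n 0 := by
  refine sum_nbij' (fun P => (P, ∅)) Prod.fst ?_ ?_ (fun _ _ => rfl) ?_ ?_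
  · intro P hP
    obtain ⟨-, hpart, hnc⟩ := mem_filter.1 hP
    exact mem_markedNC.2
      ⟨⟨isPartitionOf_iff.1 hpart, hnc, empty_subset _, by simp⟩, card_empty⟩
  · intro x hx
    obtain ⟨hx, -⟩ := mem_markedNC.1 hx
    refine mem_filter.2 ⟨mem_powerset.2 fun B hB => mem_powerset.2 ?_,
      isPartitionOf_iff.2 hx.isPartition, hx.nonCrossing⟩
    exact hx.isPartition.subset B hB
  · intro x hx
    exact Prod.ext rfl (card_eq_zero.1 (mem_markedNC.1 hx).2).symm
  · intro P _
    simp [markedWt]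

open scoped Classical in
/-- `∑_{π ∈ NC(n)} q^{∑_{B ∈ π} wt(B)} = (1/[n+1]) qbinom(2n, n)`, with the
denominator cleared. -/
theorem NC_wt_gen_eq_qCatalan (n : ℕ) :
    qInt (n + 1) *
      (∑ P ∈ ((Finset.Icc 1 n).powerset.powerset).filter
          (fun P => IsPartitionOf n P ∧ IsNonCrossing P),
        (X : Polynomial ℕ) ^ (∑ B ∈ P, blockWt B)) = qBinom (2 * n) n := by
  apply map_injective (Nat.castRingHom ℤ) Nat.cast_injective
  rw [Polynomial.map_mul, sum_ncPartitions_eq_markedPoly, markedPoly_map,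
    qInt_succ_mul_qBallot_zero]
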